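/- Let $C = \frac{k-2}{2}\bar{D}_x(B)$ with $B = \frac{\dot{a}}{3}x + 4(k-1)au_1^2 + b$ ($a, b$ functions of $t$, $k \geq 7$). Then $C$ has order at most $2$ in the variables $u_i$, and $\partial_{u_{k-2}}\big(l_{\mathcal{E}}^*(C u_{k-3})\big) = 3\,\bar{D}_x^2(C)$, which lies in the image of $\bar{D}_x$. -/

import Mathlib

/-- Functions on the jet coordinates `t`, `x`, `u_0, u_1, u_2, …`. -/
abbrev JetFn : Type := ℝ → ℝ → (ℕ → ℝ) → ℝ

/-- Partial derivative with respect to the jet variable `u_i`. -/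
noncomputable def pdu (i : ℕ) (f : JetFn) : JetFn :=
  fun t x u => deriv (fun s => f t x (Function.update u i s)) (u i)

/-- Partial derivative with respect to `x`. -/
noncomputable def pdx (f : JetFn) : JetFn :=
  fun t x u => deriv (fun s => f t s u) x

/-- Partial derivative with respect to `t`. -/
noncomputable def pdt (f : JetFn) : JetFn :=
  fun t x u => deriv (fun s => f s x u) t

/-- Total derivative `D_x = ∂_x + Σ u_{i+1} ∂_{u_i}`. -/
noncomputable def Dx (f : JetFn) : JetFn :=
  fun t x u => pdx f t x u + ∑' i : ℕ, u (i + 1) * pdu i f t x u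

/-- Right-hand side `4 u_1³ + u_3` of the potential mKdV equation. -/
def mkdvF : JetFn := fun _ _ u => 4 * (u 1) ^ 3 + u 3

/-- `4 u_1³`. -/
def cube : JetFn := fun _ _ u => 4 * (u 1) ^ 3

/-- `u_1²`. -/
def u1sq : JetFn := fun _ _ u => (u 1) ^ 2

/-- Total derivative `D_t = ∂_t + Σ D_x^i(4u_1³+u_3) ∂_{u_i}` on the mKdV prolongation. -/
noncomputable def Dt (f : JetFn) : JetFn :=
  fun t x u => pdt f t x u + ∑' i : ℕ, (Dx^[i] mkdvF) t x u * pdu i f t x u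

/-- `f` depends only on `t`, `x` and the jet variables `u_0, …, u_{N-1}`. -/
def JetDependsOn (N : ℕ) (f : JetFn) : Prop :=
  ∀ t x u v, (∀ i, i < N → u i = v i) → f t x u = f t x v

/-- `f` is a smooth function of `t`, `x` and the jet variables `u_0, …, u_{N-1}`. -/
def SmoothJet (N : ℕ) (f : JetFn) : Prop :=
  JetDependsOn N f ∧
    ContDiff ℝ (⊤ : ℕ∞) (fun p : ℝ × ℝ × (Fin N → ℝ) =>
      f p.1 p.2.1 (fun i => if h : i < N then p.2.2 ⟨i, h⟩ else 0))

/-- Linearization operator of the potential mKdV. -/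
noncomputable def lE (f : JetFn) : JetFn :=
  fun t x u => Dt f t x u - 12 * (u 1) ^ 2 * Dx f t x u - Dx^[3] f t x u

/-- Formal adjoint of the linearization operator of the potential mKdV. -/
noncomputable def lEStar (f : JetFn) : JetFn :=
  fun t x u => -Dt f t x u + 12 * (u 1) ^ 2 * Dx f t x u
    + 12 * Dx u1sq t x u * f t x u + Dx^[3] f t x u

/-- Scaling vector field `X = 3t∂_t + x∂_x - Σ j u_j ∂_{u_j}`. -/
noncomputable def Xscale (f : JetFn) : JetFn :=
  fun t x u => 3 * t * pdt f t x u + x * pdx f t x u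
    - ∑' j : ℕ, (j : ℝ) * u j * pdu j f t x u

/-- Coefficients (after normal ordering) of the formal adjoint
`(Σ_{i≤k} c_i D_x^i)^* = Σ_i (-D_x)^i ∘ c_i`. -/
noncomputable def adjCoeff (k : ℕ) (c : ℕ → JetFn) (j : ℕ) : JetFn :=
  fun t x u => ∑ i ∈ Finset.range (k + 1),
    if j ≤ i then (-1 : ℝ) ^ i * (i.choose j : ℝ) * Dx^[i - j] (c i) t x u else 0


namespace S19

abbrev Mon := List ℕ
abbrev Pol := List ((ℝ → ℝ) × Mon)

def val (u : ℕ → ℝ) (m : Mon) : ℝ := (m.map u).prod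

noncomputable def evalP (P : Pol) : JetFn := fun t _x u => (P.map fun T => T.1 t * val u T.2).sum

@[simp] lemma val_nil (u : ℕ → ℝ) : val u [] = 1 := rfl
@[simp] lemma val_cons (u : ℕ → ℝ) (j : ℕ) (m : Mon) : val u (j :: m) = u j * val u m := by
  simp [val]

@[simp] lemma evalP_nil (t x : ℝ) (u : ℕ → ℝ) : evalP [] t x u = 0 := rfl
@[simp] lemma evalP_cons (c : ℝ → ℝ) (m : Mon) (P : Pol) (t x : ℝ) (u : ℕ → ℝ) :
    evalP ((c, m) :: P) t x u = c t * val u m + evalP P t x u := by simp [evalP]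

lemma evalP_append (P Q : Pol) (t x : ℝ) (u : ℕ → ℝ) :
    evalP (P ++ Q) t x u = evalP P t x u + evalP Q t x u := by simp [evalP]

def dmon (i : ℕ) : Mon → List Mon
  | [] => []
  | j :: m => (if j = i then [m] else []) ++ (dmon i m).map (j :: ·)

def dmonX : Mon → List Mon
  | [] => []
  | j :: m => ((j + 1) :: m) :: (dmonX m).map (j :: ·)

def pduP (i : ℕ) (P : Pol) : Pol := P.flatMap fun T => (dmon i T.2).map fun m => (T.1, m)
def DxP (P : Pol) : Pol := P.flatMap fun T => (dmonX T.2).map fun m => (T.1, m)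

@[simp] lemma pduP_nil (i : ℕ) : pduP i [] = [] := rfl
@[simp] lemma pduP_cons (i : ℕ) (c : ℝ → ℝ) (m : Mon) (P : Pol) :
    pduP i ((c, m) :: P) = (dmon i m).map (fun m' => (c, m')) ++ pduP i P := by
  simp [pduP]
@[simp] lemma DxP_nil : DxP [] = [] := rfl
@[simp] lemma DxP_cons (c : ℝ → ℝ) (m : Mon) (P : Pol) :
    DxP ((c, m) :: P) = (dmonX m).map (fun m' => (c, m')) ++ DxP P := by simp [DxP]

lemma pduP_append (i : ℕ) (P Q : Pol) : pduP i (P ++ Q) = pduP i P ++ pduP i Q := by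
  simp [pduP]
lemma DxP_append (P Q : Pol) : DxP (P ++ Q) = DxP P ++ DxP Q := by simp [DxP]

lemma sum_map_cons' (u : ℕ → ℝ) (j : ℕ) (L : List Mon) :
    (L.map (val u ∘ (j :: ·))).sum = u j * ((L.map (val u)).sum) := by
  induction L with
  | nil => simp
  | cons a L ih => simp [Function.comp, ih]; ring

lemma sum_map_cons (u : ℕ → ℝ) (j : ℕ) (L : List Mon) :
    ((L.map (j :: ·)).map (val u)).sum = u j * ((L.map (val u)).sum) := by
  rw [List.map_map]; exact sum_map_cons' u j L

lemma evalP_map_snd (c : ℝ → ℝ) (L : List Mon) (t x : ℝ) (u : ℕ → ℝ) :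
    evalP (L.map fun m => (c, m)) t x u = c t * ((L.map (val u)).sum) := by
  induction L with
  | nil => simp
  | cons a L ih => simp [ih]; ring

lemma hasDerivAt_val (u : ℕ → ℝ) (i : ℕ) :
    ∀ m : Mon, HasDerivAt (fun s => val (Function.update u i s) m)
      (((dmon i m).map (val u)).sum) (u i) := by
  intro m
  induction m with
  | nil => simpa [val, dmon] using hasDerivAt_const (u i) (1 : ℝ)
  | cons j m ih =>
    by_cases hj : j = i
    · subst hj
      have h := (hasDerivAt_id (u j)).mul ih
      simp only [Function.update_eq_self, id_eq, one_mul] at h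
      have hfun : (fun s => val (Function.update u j s) (j :: m))
          = fun s => s * val (Function.update u j s) m := by
        funext s; simp
      rw [hfun]
      have : ((dmon j (j :: m)).map (val u)).sum
          = val u m + u j * ((dmon j m).map (val u)).sum := by
        simp [dmon, sum_map_cons']
      rw [this]; exact h
    · have h := ih.const_mul (u j)
      have hfun : (fun s => val (Function.update u i s) (j :: m))
          = fun s => u j * val (Function.update u i s) m := by
        funext s; simp [Function.update_of_ne hj]
      rw [hfun]
      have : ((dmon i (j :: m)).map (val u)).sum
          = u j * ((dmon i m).map (val u)).sum := by
        simp [dmon, hj, sum_map_cons']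
      rw [this]; exact h

lemma hasDerivAt_evalP (t x : ℝ) (u : ℕ → ℝ) (i : ℕ) :
    ∀ P : Pol, HasDerivAt (fun s => evalP P t x (Function.update u i s))
      (evalP (pduP i P) t x u) (u i) := by
  intro P
  induction P with
  | nil => simpa using hasDerivAt_const (u i) (0 : ℝ)
  | cons T P ih =>
    obtain ⟨c, m⟩ := T
    have h := ((hasDerivAt_val u i m).const_mul (c t)).add ih
    have hfun : (fun s => evalP ((c, m) :: P) t x (Function.update u i s))
        = fun s => c t * val (Function.update u i s) m + evalP P t x (Function.update u i s) := by
      funext s; simp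
    rw [hfun]
    have : evalP (pduP i ((c, m) :: P)) t x u
        = c t * ((dmon i m).map (val u)).sum + evalP (pduP i P) t x u := by
      rw [pduP_cons, evalP_append, evalP_map_snd]
    rw [this]; exact h

lemma pdu_evalP (i : ℕ) (P : Pol) : pdu i (evalP P) = evalP (pduP i P) := by
  funext t x u
  exact (hasDerivAt_evalP t x u i P).deriv

lemma dmon_eq_nil {i : ℕ} : ∀ {m : Mon}, i ∉ m → dmon i m = [] := by
  intro m
  induction m with
  | nil => intro _; rfl
  | cons j m ih =>
    intro h
    rw [List.mem_cons, not_or] at h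
    simp [dmon, ih h.2, Ne.symm h.1]

lemma pduP_eq_nil {i : ℕ} {P : Pol} (h : ∀ T ∈ P, i ∉ T.2) : pduP i P = [] := by
  induction P with
  | nil => rfl
  | cons T P ih =>
    obtain ⟨c, m⟩ := T
    rw [pduP_cons, dmon_eq_nil (h (c, m) (List.mem_cons_self)), List.map_nil,
      List.nil_append]
    exact ih fun T hT => h T (List.mem_cons_of_mem _ hT)

lemma val_update {u : ℕ → ℝ} {i : ℕ} {s : ℝ} : ∀ {m : Mon}, i ∉ m →
    val (Function.update u i s) m = val u m := by
  intro m
  induction m with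
  | nil => intro _; rfl
  | cons j m ih =>
    intro h
    rw [List.mem_cons, not_or] at h
    rw [val_cons, val_cons, ih h.2, Function.update_of_ne (Ne.symm h.1)]

lemma evalP_update {t x : ℝ} {u : ℕ → ℝ} {i : ℕ} {s : ℝ} : ∀ {P : Pol},
    (∀ T ∈ P, i ∉ T.2) →
    evalP P t x (Function.update u i s) = evalP P t x u := by
  intro P
  induction P with
  | nil => intro _; rfl
  | cons T P ih =>
    intro h
    obtain ⟨c, m⟩ := T
    rw [evalP_cons, evalP_cons, val_update (h (c, m) (List.mem_cons_self)),
      ih fun T hT => h T (List.mem_cons_of_mem _ hT)]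

lemma le_foldr_max (l : List ℕ) : ∀ j ∈ l, j ≤ l.foldr max 0 := by
  induction l with
  | nil => simp
  | cons a l ih =>
    intro j hj
    rcases List.mem_cons.1 hj with h | h
    · subst h; exact le_max_left _ _
    · exact le_trans (ih j h) (le_max_right _ _)

lemma exists_bdd (P : Pol) : ∃ N, ∀ T ∈ P, ∀ j ∈ T.2, j < N := by
  refine ⟨((P.map Prod.snd).flatten).foldr max 0 + 1, fun T hT j hj => ?_⟩
  have : j ∈ (P.map Prod.snd).flatten :=
    List.mem_flatten.2 ⟨T.2, List.mem_map.2 ⟨T, hT, rfl⟩, hj⟩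
  exact Nat.lt_succ_of_le (le_foldr_max _ j this)

lemma pdx_evalP (P : Pol) (t x : ℝ) (u : ℕ → ℝ) : pdx (evalP P) t x u = 0 := by
  show deriv (fun s => evalP P t s u) x = 0
  rw [show (fun s : ℝ => evalP P t s u)
      = (fun _ => (P.map fun T => T.1 t * val u T.2).sum) from rfl]
  exact deriv_const _ _

lemma sum_dmonX (u : ℕ → ℝ) (N : ℕ) :
    ∀ m : Mon, (∀ j ∈ m, j < N) →
      (∑ i ∈ Finset.range N, u (i + 1) * ((dmon i m).map (val u)).sum)
        = ((dmonX m).map (val u)).sum := by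
  intro m
  induction m with
  | nil => intro _; simp [dmon, dmonX]
  | cons j m ih =>
    intro h
    have hj : j < N := h j (List.mem_cons_self)
    have hm : ∀ i ∈ m, i < N := fun i hi => h i (List.mem_cons_of_mem _ hi)
    have expand : ∀ i, ((dmon i (j :: m)).map (val u)).sum
        = (if j = i then val u m else 0) + u j * ((dmon i m).map (val u)).sum := by
      intro i
      by_cases hji : j = i <;> simp [dmon, hji, sum_map_cons']
    calc (∑ i ∈ Finset.range N, u (i + 1) * ((dmon i (j :: m)).map (val u)).sum)
        = ∑ i ∈ Finset.range N, ((if j = i then u (i + 1) * val u m else 0)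
            + u j * (u (i + 1) * ((dmon i m).map (val u)).sum)) := by
          refine Finset.sum_congr rfl fun i _ => ?_
          rw [expand i]
          by_cases hji : j = i <;> simp [hji] <;> ring
      _ = u (j + 1) * val u m
          + u j * ∑ i ∈ Finset.range N, u (i + 1) * ((dmon i m).map (val u)).sum := by
          rw [Finset.sum_add_distrib, Finset.sum_ite_eq (Finset.range N) j
            (fun i => u (i + 1) * val u m), ← Finset.mul_sum]
          simp [Finset.mem_range.mpr hj]
      _ = ((dmonX (j :: m)).map (val u)).sum := by
          rw [ih hm]; simp [dmonX, sum_map_cons']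

lemma sum_DxP (t x : ℝ) (u : ℕ → ℝ) (N : ℕ) :
    ∀ P : Pol, (∀ T ∈ P, ∀ j ∈ T.2, j < N) →
      (∑ i ∈ Finset.range N, u (i + 1) * evalP (pduP i P) t x u) = evalP (DxP P) t x u := by
  intro P
  induction P with
  | nil => intro _; simp
  | cons T P ih =>
    intro h
    obtain ⟨c, m⟩ := T
    have hm : ∀ j ∈ m, j < N := h (c, m) (List.mem_cons_self)
    have hP : ∀ T ∈ P, ∀ j ∈ T.2, j < N := fun T hT => h T (List.mem_cons_of_mem _ hT)
    have expand : ∀ i, evalP (pduP i ((c, m) :: P)) t x u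
        = c t * ((dmon i m).map (val u)).sum + evalP (pduP i P) t x u := by
      intro i; rw [pduP_cons, evalP_append, evalP_map_snd]
    calc (∑ i ∈ Finset.range N, u (i + 1) * evalP (pduP i ((c, m) :: P)) t x u)
        = ∑ i ∈ Finset.range N, (c t * (u (i + 1) * ((dmon i m).map (val u)).sum)
            + u (i + 1) * evalP (pduP i P) t x u) := by
          refine Finset.sum_congr rfl fun i _ => ?_
          rw [expand i]; ring
      _ = c t * ((dmonX m).map (val u)).sum + evalP (DxP P) t x u := by
          rw [Finset.sum_add_distrib, ← Finset.mul_sum, sum_dmonX u N m hm, ih hP]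
      _ = evalP (DxP ((c, m) :: P)) t x u := by
          rw [DxP_cons, evalP_append, evalP_map_snd]

lemma Dx_evalP (P : Pol) : Dx (evalP P) = evalP (DxP P) := by
  funext t x u
  obtain ⟨N, hN⟩ := exists_bdd P
  show pdx (evalP P) t x u + (∑' i : ℕ, u (i + 1) * pdu i (evalP P) t x u) = _
  rw [pdx_evalP, zero_add]
  rw [tsum_eq_sum (s := Finset.range N) ?hz]
  case hz =>
    intro i hi
    have hNi : N ≤ i := le_of_not_gt fun hlt => hi (Finset.mem_range.2 hlt)
    rw [pdu_evalP, pduP_eq_nil fun T hT hmem =>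
      absurd (hN T hT i hmem) (not_lt.2 hNi), evalP_nil, mul_zero]
  · simp only [pdu_evalP]
    exact sum_DxP t x u N P hN

lemma Dx_iter_evalP (n : ℕ) : ∀ P : Pol, Dx^[n] (evalP P) = evalP (DxP^[n] P) := by
  induction n with
  | zero => intro P; rfl
  | succ n ih =>
    intro P
    rw [Function.iterate_succ_apply, Function.iterate_succ_apply, Dx_evalP, ih]

lemma mem_dmonX : ∀ {m m' : Mon}, m' ∈ dmonX m → ∀ j' ∈ m', j' ∈ m ∨ ∃ j ∈ m, j' = j + 1 := by
  intro m
  induction m with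
  | nil => intro m' h; simp [dmonX] at h
  | cons j m ih =>
    intro m' h j' hj'
    rw [dmonX, List.mem_cons] at h
    rcases h with h | h
    · subst h
      rcases List.mem_cons.1 hj' with h | h
      · exact Or.inr ⟨j, List.mem_cons_self, h⟩
      · exact Or.inl (List.mem_cons_of_mem _ h)
    · obtain ⟨m'', hm'', rfl⟩ := List.mem_map.1 h
      rcases List.mem_cons.1 hj' with h' | h'
      · exact Or.inl (h' ▸ List.mem_cons_self)
      · rcases ih hm'' j' h' with h'' | ⟨j₀, hj₀, rfl⟩
        · exact Or.inl (List.mem_cons_of_mem _ h'')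
        · exact Or.inr ⟨j₀, List.mem_cons_of_mem _ hj₀, rfl⟩

lemma DxP_bdd {N : ℕ} {P : Pol} (h : ∀ T ∈ P, ∀ j ∈ T.2, j ≤ N) :
    ∀ T ∈ DxP P, ∀ j ∈ T.2, j ≤ N + 1 := by
  intro T hT j hj
  obtain ⟨T₀, hT₀, hT'⟩ := List.mem_flatMap.1 hT
  obtain ⟨m', hm', rfl⟩ := List.mem_map.1 hT'
  rcases mem_dmonX hm' j hj with h' | ⟨j₀, hj₀, rfl⟩
  · exact le_trans (h T₀ hT₀ j h') (Nat.le_succ N)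
  · exact Nat.succ_le_succ (h T₀ hT₀ j₀ hj₀)

def negP (P : Pol) : Pol := P.map fun T => (fun t => -(T.1 t), T.2)
def mulP (P Q : Pol) : Pol := P.flatMap fun T => Q.map fun T' =>
  (fun t => T.1 t * T'.1 t, T.2 ++ T'.2)

@[simp] lemma negP_nil : negP [] = [] := rfl
@[simp] lemma negP_cons (c : ℝ → ℝ) (m : Mon) (P : Pol) :
    negP ((c, m) :: P) = (fun t => -(c t), m) :: negP P := rfl
@[simp] lemma mulP_nil (Q : Pol) : mulP [] Q = [] := rfl
@[simp] lemma mulP_cons (c : ℝ → ℝ) (m : Mon) (P Q : Pol) :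
    mulP ((c, m) :: P) Q = (Q.map fun T' => (fun t => c t * T'.1 t, m ++ T'.2)) ++ mulP P Q := by
  simp [mulP]

lemma evalP_negP (P : Pol) (t x : ℝ) (u : ℕ → ℝ) :
    evalP (negP P) t x u = -evalP P t x u := by
  induction P with
  | nil => simp
  | cons T P ih => obtain ⟨c, m⟩ := T; simp [ih]; ring

lemma val_append (u : ℕ → ℝ) (m m' : Mon) : val u (m ++ m') = val u m * val u m' := by
  simp [val]

lemma evalP_mulRow (c : ℝ → ℝ) (m : Mon) (Q : Pol) (t x : ℝ) (u : ℕ → ℝ) :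
    evalP (Q.map fun T' => (fun t => c t * T'.1 t, m ++ T'.2)) t x u
      = c t * val u m * evalP Q t x u := by
  induction Q with
  | nil => simp
  | cons T' Q ihQ =>
    obtain ⟨c', m'⟩ := T'
    simp only [List.map_cons, evalP_cons, ihQ, val_append]
    ring

lemma evalP_mulP (P Q : Pol) (t x : ℝ) (u : ℕ → ℝ) :
    evalP (mulP P Q) t x u = evalP P t x u * evalP Q t x u := by
  induction P with
  | nil => simp
  | cons T P ih =>
    obtain ⟨c, m⟩ := T
    rw [mulP_cons, evalP_append, ih, evalP_cons, evalP_mulRow]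
    ring

lemma mem_mulP {T : (ℝ → ℝ) × Mon} {P Q : Pol} (h : T ∈ mulP P Q) :
    ∃ m m', (∃ c, (c, m) ∈ P) ∧ (∃ c', (c', m') ∈ Q) ∧ T.2 = m ++ m' := by
  obtain ⟨T₀, hT₀, hT'⟩ := List.mem_flatMap.1 h
  obtain ⟨T₁, hT₁, rfl⟩ := List.mem_map.1 hT'
  exact ⟨T₀.2, T₁.2, ⟨T₀.1, hT₀⟩, ⟨T₁.1, hT₁⟩, rfl⟩

lemma mkdv_eval : mkdvF = evalP [(fun _ => (4 : ℝ), [1, 1, 1]), (fun _ => (1 : ℝ), [3])] := by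
  funext t x u
  simp [mkdvF, evalP, val]
  ring

lemma u1sq_eval : u1sq = evalP [(fun _ => (1 : ℝ), [1, 1])] := by
  funext t x u
  simp [u1sq, evalP, val]
  ring

lemma mkdv_struct : ∀ j, 1 ≤ j → ∃ Q : Pol, (∀ T ∈ Q, ∀ i ∈ T.2, i ≤ j) ∧
    Dx^[j] mkdvF = evalP ((fun _ => (12 : ℝ), [1, 1, j + 1]) :: (fun _ => (1 : ℝ), [j + 3]) :: Q) := by
  intro j hj
  induction j with
  | zero => omega
  | succ j ih =>
    by_cases hj0 : j = 0
    · subst hj0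
      refine ⟨[], by simp, ?_⟩
      rw [show (0 + 1 : ℕ) = 1 from rfl, Function.iterate_one, mkdv_eval, Dx_evalP]
      funext t x u
      norm_num [DxP, dmonX, evalP, val]
      ring
    · obtain ⟨Q, hQ, hE⟩ := ih (by omega)
      refine ⟨(fun _ => (12 : ℝ), [2, 1, j + 1]) :: (fun _ => (12 : ℝ), [1, 2, j + 1])
        :: DxP Q, ?_, ?_⟩
      · intro T hT i hi
        rcases List.mem_cons.1 hT with h | hT
        · subst h; simp at hi; rcases hi with h | h | h <;> omega
        rcases List.mem_cons.1 hT with h | hT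
        · subst h; simp at hi; rcases hi with h | h | h <;> omega
        · exact DxP_bdd hQ T hT i hi
      · rw [Function.iterate_succ_apply', hE, Dx_evalP]
        funext t x u
        rw [DxP_cons, DxP_cons]
        simp only [dmonX, List.map_cons, List.map_nil, evalP_append, evalP_cons, evalP_nil,
          val_cons, val_nil]
        rw [show j + 3 + 1 = j + 1 + 3 from by omega]
        norm_num
        ring

lemma pduP_negP (i : ℕ) : ∀ P : Pol, pduP i (negP P) = negP (pduP i P) := by
  intro P
  induction P with
  | nil => rfl
  | cons T P ih =>
    obtain ⟨c, m⟩ := T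
    simp only [negP, List.map_cons] at ih ⊢
    rw [pduP_cons, ih]
    simp [List.map_append, List.map_map, Function.comp_def]

lemma pduP_mulP_eval (i : ℕ) (A B : Pol) (t x : ℝ) (u : ℕ → ℝ) :
    evalP (pduP i (mulP A B)) t x u
      = evalP (pduP i A) t x u * evalP B t x u + evalP A t x u * evalP (pduP i B) t x u := by
  have h1 := hasDerivAt_evalP t x u i (mulP A B)
  have h2 := (hasDerivAt_evalP t x u i A).mul (hasDerivAt_evalP t x u i B)
  rw [show (fun s => evalP (mulP A B) t x (Function.update u i s))
      = fun s => evalP A t x (Function.update u i s) * evalP B t x (Function.update u i s)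
      from funext fun s => evalP_mulP A B t x (Function.update u i s)] at h1
  have h3 := h1.unique h2
  rw [h3, Function.update_eq_self]

noncomputable def cc (k : ℕ) (a : ℝ → ℝ) : ℝ → ℝ := fun t => ((k : ℝ) - 2) / 2 * (deriv a t / 3)
noncomputable def dd (k : ℕ) (a : ℝ → ℝ) : ℝ → ℝ :=
  fun t => ((k : ℝ) - 2) / 2 * (8 * ((k : ℝ) - 1) * a t)

noncomputable def BIGP (n : ℕ) (a : ℝ → ℝ) (Q : Pol) : Pol :=
  negP (mulP (DxP [(fun _ => (4:ℝ), [1,1,1]), (fun _ => (1:ℝ), [3])])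
          (pduP 1 [(cc (7 + n) a, [4 + n]), (dd (7 + n) a, [1, 2, 4 + n])])
    ++ (mulP (DxP (DxP [(fun _ => (4:ℝ), [1,1,1]), (fun _ => (1:ℝ), [3])]))
          (pduP 2 [(cc (7 + n) a, [4 + n]), (dd (7 + n) a, [1, 2, 4 + n])])
    ++ mulP ((fun _ => (12:ℝ), [1, 1, 4 + n + 1]) :: (fun _ => (1:ℝ), [4 + n + 3]) :: Q)
          (pduP (4 + n) [(cc (7 + n) a, [4 + n]), (dd (7 + n) a, [1, 2, 4 + n])])))
  ++ (mulP [(fun _ => (12:ℝ), [1, 1])]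
        (DxP [(cc (7 + n) a, [4 + n]), (dd (7 + n) a, [1, 2, 4 + n])])
  ++ (mulP [(fun _ => (12:ℝ), [])]
        (mulP (DxP [(fun _ => (1:ℝ), [1, 1])])
          [(cc (7 + n) a, [4 + n]), (dd (7 + n) a, [1, 2, 4 + n])])
  ++ DxP (DxP (DxP [(cc (7 + n) a, [4 + n]), (dd (7 + n) a, [1, 2, 4 + n])]))))

end S19

open S19 in
theorem stmt19c3 (n : ℕ) (a : ℝ → ℝ) (ha : ContDiff ℝ (⊤ : ℕ∞) a) (C : JetFn)
    (hCe : C = evalP [(cc (7 + n) a, []), (dd (7 + n) a, [1, 2])]) :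
    ∃ (M : ℕ) (h : JetFn), SmoothJet M h ∧ (3 : ℝ) • Dx^[2] C = Dx h := by
  refine ⟨4, evalP [(fun t => 3 * dd (7 + n) a t, [2, 2]), (fun t => 3 * dd (7 + n) a t, [1, 3])],
    ⟨?_, ?_⟩, ?_⟩
  · -- DependsOn
    intro t x u v huv
    simp only [evalP, val, List.map_cons, List.map_nil, List.sum_cons, List.sum_nil]
    rw [huv 1 (by norm_num), huv 2 (by norm_num), huv 3 (by norm_num)]
  · -- ContDiff
    have : (fun p : ℝ × ℝ × (Fin 4 → ℝ) =>
        evalP [(fun t => 3 * dd (7 + n) a t, [2, 2]), (fun t => 3 * dd (7 + n) a t, [1, 3])]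
          p.1 p.2.1 (fun i => if h : i < 4 then p.2.2 ⟨i, h⟩ else 0))
        = fun p : ℝ × ℝ × (Fin 4 → ℝ) =>
          3 * dd (7 + n) a p.1 * (p.2.2 ⟨2, by norm_num⟩ * (p.2.2 ⟨2, by norm_num⟩ * 1))
          + (3 * dd (7 + n) a p.1 * (p.2.2 ⟨1, by norm_num⟩ * (p.2.2 ⟨3, by norm_num⟩ * 1)) + 0) := by
      funext p
      simp only [evalP, val, List.map_cons, List.map_nil, List.sum_cons, List.sum_nil]
      norm_num
    rw [this]
    unfold dd
    fun_prop
  · -- equality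
    rw [hCe, Dx_iter_evalP 2, Dx_evalP]
    funext t x u
    simp only [Pi.smul_apply, smul_eq_mul]
    norm_num [DxP, dmonX, evalP, val, dd]
    ring

open S19 in
theorem stmt19c2 (n : ℕ) (a : ℝ → ℝ) (C : JetFn)
    (hCe : C = evalP [(cc (7 + n) a, []), (dd (7 + n) a, [1, 2])]) :
    pdu (7 + n - 2) (lEStar (fun t x u => C t x u * u (7 + n - 3))) = (3 : ℝ) • Dx^[2] C := by
  simp only [show 7 + n - 2 = 5 + n from by omega, show 7 + n - 3 = 4 + n from by omega, hCe]
  rw [show (fun t x u => evalP [(cc (7 + n) a, []), (dd (7 + n) a, [1, 2])] t x u * u (4 + n))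
      = evalP [(cc (7 + n) a, [4 + n]), (dd (7 + n) a, [1, 2, 4 + n])] from by
    funext t x u; simp [evalP, val]; ring]
  rw [Dx_iter_evalP 2]
  have hker : ∀ i, i ≠ 1 → i ≠ 2 → i ≠ 4 + n →
      pduP i [(cc (7 + n) a, [4 + n]), (dd (7 + n) a, [1, 2, 4 + n])] = [] := by
    intro i h1 h2 h3
    refine pduP_eq_nil fun T hT => ?_
    simp only [List.mem_cons, List.not_mem_nil, or_false] at hT
    rcases hT with rfl | rfl <;> simp <;> omega
  obtain ⟨Q, hQ, hSQ⟩ := mkdv_struct (4 + n) (by omega)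
  have hQnil : pduP (5 + n) Q = [] :=
    pduP_eq_nil fun T hT hm => by have := hQ T hT _ hm; omega
  have hm1 : Dx^[1] mkdvF = evalP (DxP [(fun _ => (4:ℝ), [1,1,1]), (fun _ => (1:ℝ), [3])]) := by
    rw [Function.iterate_one, mkdv_eval, Dx_evalP]
  have hm2 : Dx^[2] mkdvF
      = evalP (DxP (DxP [(fun _ => (4:ℝ), [1,1,1]), (fun _ => (1:ℝ), [3])])) := by
    rw [mkdv_eval]; exact Dx_iter_evalP 2 _
  have hDt : ∀ t x (u : ℕ → ℝ),
      Dt (evalP [(cc (7 + n) a, [4 + n]), (dd (7 + n) a, [1, 2, 4 + n])]) t x u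
      = pdt (evalP [(cc (7 + n) a, [4 + n]), (dd (7 + n) a, [1, 2, 4 + n])]) t x u
      + (evalP (DxP [(fun _ => (4:ℝ), [1,1,1]), (fun _ => (1:ℝ), [3])]) t x u
          * evalP (pduP 1 [(cc (7 + n) a, [4 + n]), (dd (7 + n) a, [1, 2, 4 + n])]) t x u
      + (evalP (DxP (DxP [(fun _ => (4:ℝ), [1,1,1]), (fun _ => (1:ℝ), [3])])) t x u
          * evalP (pduP 2 [(cc (7 + n) a, [4 + n]), (dd (7 + n) a, [1, 2, 4 + n])]) t x u
      + evalP ((fun _ => (12:ℝ), [1, 1, 4 + n + 1]) :: (fun _ => (1:ℝ), [4 + n + 3]) :: Q) t x u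
          * evalP (pduP (4 + n) [(cc (7 + n) a, [4 + n]), (dd (7 + n) a, [1, 2, 4 + n])]) t x u)) := by
    intro t x u
    show pdt _ t x u + (∑' i : ℕ, (Dx^[i] mkdvF) t x u
      * pdu i (evalP [(cc (7 + n) a, [4 + n]), (dd (7 + n) a, [1, 2, 4 + n])]) t x u) = _
    congr 1
    rw [tsum_eq_sum (s := ({1, 2, 4 + n} : Finset ℕ)) ?hz]
    case hz =>
      intro i hi
      simp only [Finset.mem_insert, Finset.mem_singleton, not_or] at hi
      rw [pdu_evalP, hker i hi.1 hi.2.1 hi.2.2]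
      simp
    rw [Finset.sum_insert (by simp; omega), Finset.sum_insert (by simp; omega),
      Finset.sum_singleton, pdu_evalP, pdu_evalP, pdu_evalP, hm1, hm2, hSQ]
  funext t x u
  simp only [Pi.smul_apply, smul_eq_mul]
  have hpdtc : ∀ s, pdt (evalP [(cc (7 + n) a, [4 + n]), (dd (7 + n) a, [1, 2, 4 + n])]) t x
      (Function.update u (5 + n) s)
      = pdt (evalP [(cc (7 + n) a, [4 + n]), (dd (7 + n) a, [1, 2, 4 + n])]) t x u := by
    intro s
    show deriv _ t = deriv _ t
    congr 1
    funext τ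
    refine evalP_update fun T hT => ?_
    simp only [List.mem_cons, List.not_mem_nil, or_false] at hT
    rcases hT with rfl | rfl <;> simp <;> omega
  have hLE : ∀ s, lEStar (evalP [(cc (7 + n) a, [4 + n]), (dd (7 + n) a, [1, 2, 4 + n])]) t x
      (Function.update u (5 + n) s)
      = -(pdt (evalP [(cc (7 + n) a, [4 + n]), (dd (7 + n) a, [1, 2, 4 + n])]) t x u)
      + evalP (BIGP n a Q) t x (Function.update u (5 + n) s) := by
    intro s
    show -Dt _ t x (Function.update u (5 + n) s)
        + 12 * (Function.update u (5 + n) s 1) ^ 2 * Dx _ t x (Function.update u (5 + n) s)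
        + 12 * Dx u1sq t x (Function.update u (5 + n) s)
            * evalP _ t x (Function.update u (5 + n) s)
        + Dx^[3] _ t x (Function.update u (5 + n) s) = _
    rw [hDt t x (Function.update u (5 + n) s), hpdtc s,
      Dx_evalP [(cc (7 + n) a, [4 + n]), (dd (7 + n) a, [1, 2, 4 + n])],
      show Dx u1sq = evalP (DxP [(fun _ => (1:ℝ), [1, 1])]) from by rw [u1sq_eval, Dx_evalP],
      show Dx^[3] (evalP [(cc (7 + n) a, [4 + n]), (dd (7 + n) a, [1, 2, 4 + n])])
        = evalP (DxP (DxP (DxP [(cc (7 + n) a, [4 + n]), (dd (7 + n) a, [1, 2, 4 + n])])))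
        from Dx_iter_evalP 3 _]
    simp only [BIGP, evalP_append, evalP_mulP, evalP_negP, evalP_cons, evalP_nil, val_cons,
      val_nil]
    ring
  show deriv (fun s => lEStar (evalP [(cc (7 + n) a, [4 + n]), (dd (7 + n) a, [1, 2, 4 + n])])
      t x (Function.update u (5 + n) s)) (u (5 + n)) = _
  rw [show (fun s => lEStar (evalP [(cc (7 + n) a, [4 + n]), (dd (7 + n) a, [1, 2, 4 + n])])
      t x (Function.update u (5 + n) s))
      = fun s => -(pdt (evalP [(cc (7 + n) a, [4 + n]), (dd (7 + n) a, [1, 2, 4 + n])]) t x u)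
        + evalP (BIGP n a Q) t x (Function.update u (5 + n) s) from funext hLE]
  have Hd : HasDerivAt (fun s =>
      -(pdt (evalP [(cc (7 + n) a, [4 + n]), (dd (7 + n) a, [1, 2, 4 + n])]) t x u)
      + evalP (BIGP n a Q) t x (Function.update u (5 + n) s))
      (0 + evalP (pduP (5 + n) (BIGP n a Q)) t x u) (u (5 + n)) :=
    (hasDerivAt_const _ _).add (hasDerivAt_evalP t x u (5 + n) (BIGP n a Q))
  rw [Hd.deriv, zero_add]
  simp only [BIGP, pduP_append, evalP_append, pduP_negP, evalP_negP, pduP_mulP_eval]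
  rcases n with _ | m
  · norm_num [pduP_cons, pduP_nil, DxP_cons, DxP_nil, dmon, dmonX, evalP_append,
      evalP_cons, evalP_nil, val_cons, val_nil, hQnil]
    ring
  · norm_num [pduP_cons, pduP_nil, DxP_cons, DxP_nil, dmon, dmonX, evalP_append,
      evalP_cons, evalP_nil, val_cons, val_nil, hQnil,
      show 4 + (m + 1) = 5 + m from by omega, show 5 + (m + 1) = 6 + m from by omega,
      show 5 + m + 1 = 6 + m from by omega, show 6 + m + 1 = 7 + m from by omega,
      show 7 + m + 1 = 8 + m from by omega, show 5 + m + 3 = 8 + m from by omega,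
      show ¬(1 = 6 + m) from by omega, show ¬(2 = 6 + m) from by omega,
      show ¬(3 = 6 + m) from by omega, show ¬(4 = 6 + m) from by omega,
      show ¬(5 = 6 + m) from by omega, show ¬(5 + m = 6 + m) from by omega,
      show ¬(7 + m = 6 + m) from by omega, show ¬(8 + m = 6 + m) from by omega,
      show ¬(5 + m = 1) from by omega, show ¬(5 + m = 2) from by omega,
      show ¬(1 = 5 + m) from by omega, show ¬(2 = 5 + m) from by omega]
    simp only [show 5 + (m + 1) = 6 + m from by omega] at hQnil
    simp only [hQnil, evalP_nil]
    ring

open S19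

/-- Ingredient of Lemma 5: with `B = (ȧ/3) x + 4(k-1) a u_1² + b` and
`C = ((k-2)/2) D_x(B)`, the function `C` has order at most `2`, and
`∂_{u_{k-2}}(l_E^*(C u_{k-3})) = 3 D_x²(C)`, which lies in the image of `D_x`. -/
theorem stmt19 (k : ℕ) (hk : 7 ≤ k) (a b : ℝ → ℝ)
    (ha : ContDiff ℝ (⊤ : ℕ∞) a) (hb : ContDiff ℝ (⊤ : ℕ∞) b) (B C : JetFn)
    (hB : B = fun t x u => deriv a t / 3 * x + 4 * ((k : ℝ) - 1) * a t * (u 1) ^ 2 + b t)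
    (hC : C = fun t x u => ((k : ℝ) - 2) / 2 * Dx B t x u) :
    (∀ j, 2 < j → pdu j C = 0) ∧
    pdu (k - 2) (lEStar (fun t x u => C t x u * u (k - 3))) = (3 : ℝ) • Dx^[2] C ∧
    ∃ (M : ℕ) (h : JetFn), SmoothJet M h ∧ (3 : ℝ) • Dx^[2] C = Dx h := by
  obtain ⟨n, rfl⟩ : ∃ n, k = 7 + n := ⟨k - 7, by omega⟩
  have hCe : C = evalP [(cc (7 + n) a, []), (dd (7 + n) a, [1, 2])] := by
    have hpdxB : ∀ t x (u : ℕ → ℝ), pdx B t x u = deriv a t / 3 := by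
      intro t x u
      show deriv (fun s => B t s u) x = _
      have hfun : (fun s => B t s u)
          = fun s => deriv a t / 3 * s + 4 * (((7 + n : ℕ) : ℝ) - 1) * a t * (u 1) ^ 2 + b t := by
        funext s; rw [hB]
      rw [hfun]
      have h := (((hasDerivAt_id x).const_mul (deriv a t / 3)).add_const
        (4 * (((7 + n : ℕ) : ℝ) - 1) * a t * (u 1) ^ 2)).add_const (b t)
      simpa using h.deriv
    have hpduB : ∀ i, i ≠ 1 → ∀ t x (u : ℕ → ℝ), pdu i B t x u = 0 := by
      intro i hi t x u
      show deriv (fun s => B t x (Function.update u i s)) (u i) = 0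
      have hfun : (fun s => B t x (Function.update u i s)) = fun _ => B t x u := by
        funext s; rw [hB]; simp [Function.update_of_ne (Ne.symm hi)]
      rw [hfun]; exact deriv_const _ _
    have hpdu1B : ∀ t x (u : ℕ → ℝ),
        pdu 1 B t x u = 8 * (((7 + n : ℕ) : ℝ) - 1) * a t * u 1 := by
      intro t x u
      show deriv (fun s => B t x (Function.update u 1 s)) (u 1) = _
      have hfun : (fun s => B t x (Function.update u 1 s))
          = fun s => deriv a t / 3 * x + 4 * (((7 + n : ℕ) : ℝ) - 1) * a t * s ^ 2 + b t := by
        funext s; rw [hB]; simp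
      rw [hfun]
      have h := (((hasDerivAt_pow 2 (u 1)).const_mul
        (4 * (((7 + n : ℕ) : ℝ) - 1) * a t)).const_add (deriv a t / 3 * x)).add_const (b t)
      rw [h.deriv]
      push_cast
      ring
    funext t x u
    simp only [hC]
    have hDxB : Dx B t x u = deriv a t / 3 + u 2 * (8 * (((7 + n : ℕ) : ℝ) - 1) * a t * u 1) := by
      show pdx B t x u + (∑' i : ℕ, u (i + 1) * pdu i B t x u) = _
      rw [hpdxB, tsum_eq_single 1 (fun i hi => by rw [hpduB i hi, mul_zero]), hpdu1B]
    rw [hDxB]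
    simp [evalP, val, cc, dd]
    ring
  refine ⟨?_, stmt19c2 n a C hCe, stmt19c3 n a ha C hCe⟩
  intro j hj
  rw [hCe, pdu_evalP, pduP_eq_nil (fun T hT => ?_)]
  · funext t x u; simp
  · simp only [List.mem_cons, List.mem_singleton, List.not_mem_nil, or_false] at hT
    rcases hT with rfl | rfl <;> simp <;> omega
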